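/- Let C_r = {z ∈ ℂ : |z| = r} and let δ be the Dirichlet metric on 𝔻. For every ε with 0 < ε < √(3/4) there exists r₀ ∈ (0,1) such that for all r with r₀ < r < 1 there is a finite set D ⊆ C_r whose cardinality is at least 1/√(1−r) and such that δ(x,y) ≥ ε for all distinct x, y ∈ D. -/

import Mathlib

/-
Take `N = ⌈1 / √(1 - r)⌉` equally spaced points on the circle of radius `r`. Distinct points
`x, y` satisfy `|1 - x ȳ|² ≥ 16 r² / N² ≥ 1 - r`. With `L = -log (1 - r)`, the diagonal values
`r² k(z, z) = -log (1 - r²)` are at least `L - log 2`, while `r² |k(x, y)| = |log (1 / (1 - x ȳ))|`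
has real part of size at most `L / 2` (because `1 - r ≤ |1 - x ȳ|² ≤ 4`) and imaginary part
at most `π`. Hence `δ(x, y)² ≥ 1 - ((L / 2)² + π²) / (L - log 2)²`, which tends to `3 / 4`.
-/

open Complex Real

/-- The reproducing kernel of the Dirichlet space. -/
noncomputable def dirK (z w : ℂ) : ℂ :=
  if z * (starRingEnd ℂ) w = 0 then 1
  else (1 / (z * (starRingEnd ℂ) w)) * Complex.log (1 / (1 - z * (starRingEnd ℂ) w))

noncomputable def dirDelta (z w : ℂ) : ℝ :=
  Real.sqrt (1 - ‖dirK z w‖ ^ 2 / ((dirK z z).re * (dirK w w).re))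

open ComplexConjugate Filter Topology

namespace Complex

theorem norm_log_sq_le (w : ℂ) : ‖log w‖ ^ 2 ≤ Real.log ‖w‖ ^ 2 + π ^ 2 := by
  rw [Complex.sq_norm, normSq_apply, log_re, log_im, ← sq, ← sq]
  have := sq_le_sq' (neg_le_of_abs_le (abs_arg_le_pi w)) (le_of_abs_le (abs_arg_le_pi w))
  linarith

theorem re_le_one_sub_of_pow_eq_one {η : ℂ} {N : ℕ} (hN : N ≠ 0) (hη : η ^ N = 1)
    (hη1 : η ≠ 1) : η.re ≤ 1 - 8 / (N : ℝ) ^ 2 := by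
  have hnorm : ‖η‖ = 1 := norm_eq_one_of_pow_eq_one hη hN
  have hexp : exp (arg η * I) = η := by simpa [hnorm] using norm_mul_exp_arg_mul_I η
  obtain ⟨n, hn⟩ : ∃ n : ℤ, (N : ℂ) * (arg η * I) = n * (2 * π * I) := by
    rw [← exp_eq_one_iff, exp_nat_mul, hexp, hη]
  have harg : (N : ℝ) * arg η = n * (2 * π) := by simpa using congrArg im hn
  have hn0 : n ≠ 0 := by
    rintro rfl
    have : arg η = 0 := by simpa [hN] using harg
    exact hη1 (by rw [← hexp, this]; simp)
  have hNpos : (0 : ℝ) < N := by positivity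
  have hlow : 2 * π / N ≤ |arg η| := by
    rw [div_le_iff₀ hNpos]
    have h1 : (1 : ℝ) ≤ |(n : ℝ)| := by exact_mod_cast Int.one_le_abs hn0
    have h2 : |(N : ℝ) * arg η| = |(n : ℝ)| * (2 * π) := by
      rw [harg, abs_mul, abs_of_pos (by positivity : (0 : ℝ) < 2 * π)]
    rw [abs_mul, abs_of_pos hNpos] at h2
    nlinarith [pi_pos]
  calc η.re = Real.cos (arg η) := by rw [cos_arg (by rintro rfl; simp at hnorm), hnorm, div_one]
    _ ≤ 1 - 2 / π ^ 2 * arg η ^ 2 := cos_le_one_sub_mul_cos_sq (abs_arg_le_pi η)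
    _ ≤ 1 - 2 / π ^ 2 * (2 * π / N) ^ 2 := by
        rw [← sq_abs (arg η)]
        gcongr
    _ = 1 - 8 / (N : ℝ) ^ 2 := by field_simp; ring

theorem norm_one_sub_ofReal_mul_sq {η : ℂ} (hη : ‖η‖ = 1) (s : ℝ) :
    ‖1 - s * η‖ ^ 2 = 1 - 2 * s * η.re + s ^ 2 := by
  have h : η.re * η.re + η.im * η.im = 1 := by
    rw [← normSq_apply, ← Complex.sq_norm, hη, one_pow]
  rw [Complex.sq_norm, normSq_apply]
  simp only [sub_re, sub_im, one_re, one_im, re_ofReal_mul, im_ofReal_mul]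
  linear_combination s ^ 2 * h

theorem exists_finset_norm_eq_card_eq {r : ℝ} (hr : 0 < r) {N : ℕ} (hN : N ≠ 0) :
    ∃ D : Finset ℂ, (∀ z ∈ D, ‖z‖ = r) ∧ D.card = N ∧
      ∀ x ∈ D, ∀ y ∈ D, x ≠ y → 16 * r ^ 2 / N ^ 2 ≤ ‖1 - x * conj y‖ ^ 2 := by
  have hroot {ζ : ℂ} (hζ : ζ ∈ Polynomial.nthRootsFinset N (1 : ℂ)) : ζ ^ N = 1 :=
    (Polynomial.mem_nthRootsFinset (Nat.pos_of_ne_zero hN) 1).1 hζ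
  have hunit {ζ : ℂ} (hζ : ζ ∈ Polynomial.nthRootsFinset N (1 : ℂ)) : ‖ζ‖ = 1 :=
    norm_eq_one_of_pow_eq_one (hroot hζ) hN
  refine ⟨(Polynomial.nthRootsFinset N (1 : ℂ)).image ((r : ℂ) * ·), ?_, ?_, ?_⟩
  · simp only [Finset.mem_image, forall_exists_index, and_imp]
    rintro _ ζ hζ rfl
    rw [norm_mul, hunit hζ, norm_real, Real.norm_of_nonneg hr.le, mul_one]
  · rw [Finset.card_image_of_injective _ (mul_right_injective₀ (ofReal_ne_zero.2 hr.ne')),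
      (isPrimitiveRoot_exp N hN).card_nthRootsFinset]
  · simp only [Finset.mem_image, forall_exists_index, and_imp]
    rintro _ ζ hζ rfl _ ξ hξ rfl hne
    have hξξ : conj ξ * ξ = 1 := by
      rw [mul_comm, mul_conj, normSq_eq_norm_sq, hunit hξ]; simp
    have hη1 : ζ * conj ξ ≠ 1 := fun h ↦
      hne (by rw [← mul_one ζ, ← hξξ, ← mul_assoc ζ, h, one_mul])
    have hη : (ζ * conj ξ) ^ N = 1 := by
      rw [mul_pow, ← map_pow, hroot hζ, hroot hξ, map_one, one_mul]
    have hηnorm : ‖ζ * conj ξ‖ = 1 := by rw [norm_mul, norm_conj, hunit hζ, hunit hξ, one_mul]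
    have hprod : r * ζ * conj (r * ξ) = ((r ^ 2 : ℝ) : ℂ) * (ζ * conj ξ) := by
      rw [map_mul, conj_ofReal]; push_cast; ring
    rw [hprod, norm_one_sub_ofReal_mul_sq hηnorm]
    have hre := mul_le_mul_of_nonneg_left (re_le_one_sub_of_pow_eq_one hN hη hη1)
      (by positivity : (0 : ℝ) ≤ 2 * r ^ 2)
    have h8 : 16 * r ^ 2 / N ^ 2 = 2 * r ^ 2 * (8 / N ^ 2) := by ring
    nlinarith [sq_nonneg (1 - r ^ 2)]

end Complex

theorem Real.four_mul_log_sq_le {s t : ℝ} (ht : 0 < t) (ht4 : t ≤ 1 / 4) (hts : t ≤ s ^ 2)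
    (hs0 : 0 ≤ s) (hs2 : s ≤ 2) : 4 * Real.log s ^ 2 ≤ Real.log t ^ 2 := by
  have hs : 0 < s := hs0.lt_of_ne (by rintro rfl; nlinarith)
  have hlow : Real.log t ≤ 2 * Real.log s := by
    have := Real.log_le_log ht hts
    rwa [Real.log_pow, Nat.cast_ofNat] at this
  have hup : 2 * Real.log s ≤ -Real.log t := by
    have h4 : Real.log t ≤ Real.log (1 / 4) := Real.log_le_log ht ht4
    have h2 : Real.log s ≤ Real.log 2 := Real.log_le_log hs hs2
    rw [one_div, Real.log_inv, show (4 : ℝ) = 2 ^ 2 by norm_num, Real.log_pow] at h4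
    push_cast at h4
    linarith
  nlinarith [sq_le_sq' (by linarith) hup]

theorem eventually_sq_div_four_add_le_mul_sq {β : ℝ} (hβ : 1 / 4 < β) (c C : ℝ) :
    ∀ᶠ u in atBot, u ^ 2 / 4 + C ≤ β * (u + c) ^ 2 := by
  have hδ : 0 < β - 1 / 4 := by linarith
  set k := β * c / (β - 1 / 4)
  have hshift : Tendsto (fun u : ℝ ↦ u + k) atBot atBot :=
    tendsto_atBot_add_const_right _ k tendsto_id
  have hsq := (hshift.atBot_mul_atBot₀ hshift).const_mul_atTop hδ
  filter_upwards [hsq.eventually_ge_atTop (C - β * c ^ 2 + β * c * k)] with u hu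
  have hsquare : β * (u + c) ^ 2 - u ^ 2 / 4
      = (β - 1 / 4) * ((u + k) * (u + k)) + β * c ^ 2 - β * c * k := by
    have hk : (β - 1 / 4) * k = β * c := mul_div_cancel₀ _ hδ.ne'
    linear_combination (-(2 * u + k)) * hk
  linarith

theorem tendsto_log_one_sub_nhdsLT_one :
    Tendsto (fun r : ℝ ↦ Real.log (1 - r)) (𝓝[<] 1) atBot := by
  refine tendsto_log_nhdsGT_zero.comp
    (tendsto_nhdsWithin_of_tendsto_nhds_of_eventually_within _ ?_ ?_)
  · exact ((continuous_sub_left 1).tendsto' 1 0 (sub_self 1)).mono_left nhdsWithin_le_nhds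
  · filter_upwards [self_mem_nhdsWithin] with r hr
    exact sub_pos.2 (Set.mem_Iio.1 hr)

theorem Nat.ceil_one_div_sqrt_sq_le {t : ℝ} (ht0 : 0 < t) (ht1 : t ≤ 1) :
    (⌈1 / √t⌉₊ : ℝ) ^ 2 ≤ 4 / t := by
  have hs : 0 < √t := Real.sqrt_pos.2 ht0
  have hs1 : √t ≤ 1 := Real.sqrt_le_one.2 ht1
  have hceil : (⌈1 / √t⌉₊ : ℝ) ≤ 2 / √t := by
    have h := Nat.ceil_lt_add_one (one_div_pos.2 hs).le
    have : 1 ≤ 1 / √t := by rw [le_div_iff₀ hs]; linarith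
    linarith [show 2 / √t = 1 / √t + 1 / √t by ring]
  calc (⌈1 / √t⌉₊ : ℝ) ^ 2 ≤ (2 / √t) ^ 2 := by gcongr
    _ = 4 / t := by rw [div_pow, Real.sq_sqrt ht0.le]; norm_num

theorem dirK_self_re {z : ℂ} (hz : z ≠ 0) :
    (dirK z z).re = -Real.log (1 - ‖z‖ ^ 2) / ‖z‖ ^ 2 := by
  have hzz : z * conj z = ((‖z‖ ^ 2 : ℝ) : ℂ) := by
    rw [mul_conj, normSq_eq_norm_sq]
  rw [dirK, if_neg (mul_ne_zero hz ((map_ne_zero _).2 hz)), hzz,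
    show (1 : ℂ) / (1 - ((‖z‖ ^ 2 : ℝ) : ℂ)) = ((1 / (1 - ‖z‖ ^ 2) : ℝ) : ℂ) by push_cast; rfl,
    ← ofReal_one, ← ofReal_div, re_ofReal_mul, log_ofReal_re]
  simp only [one_div, Real.log_inv]
  ring

theorem norm_dirK {z w : ℂ} (h : z * conj w ≠ 0) :
    ‖dirK z w‖ = ‖log (1 / (1 - z * conj w))‖ / ‖z * conj w‖ := by
  rw [dirK, if_neg h, norm_mul, norm_div, norm_one]
  ring

theorem dirDelta_eq_of_norm_eq {x y : ℂ} {r : ℝ} (hr : r ≠ 0) (hx : ‖x‖ = r) (hy : ‖y‖ = r) :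
    dirDelta x y = √(1 - ‖log (1 / (1 - x * conj y))‖ ^ 2 / Real.log (1 - r ^ 2) ^ 2) := by
  have hx0 : x ≠ 0 := by rintro rfl; simp [eq_comm, hr] at hx
  have hy0 : y ≠ 0 := by rintro rfl; simp [eq_comm, hr] at hy
  have hxy : ‖x * conj y‖ = r ^ 2 := by rw [norm_mul, norm_conj, hx, hy, sq]
  rw [dirDelta, norm_dirK (by rw [← norm_ne_zero_iff, hxy]; positivity), dirK_self_re hx0,
    dirK_self_re hy0, hxy, hx, hy]
  congr 2
  field_simp

theorem le_dirDelta_of_separated {x y : ℂ} {r ε : ℝ} (hr : 3 / 4 ≤ r) (hr1 : r < 1)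
    (hx : ‖x‖ = r) (hy : ‖y‖ = r) (hsep : 1 - r ≤ ‖1 - x * conj y‖ ^ 2)
    (hε : Real.log (1 - r) ^ 2 / 4 + π ^ 2 ≤ (1 - ε ^ 2) * (Real.log (1 - r) + Real.log 2) ^ 2) :
    ε ≤ dirDelta x y := by
  set a := x * conj y
  have ha : ‖a‖ = r ^ 2 := by rw [norm_mul, norm_conj, hx, hy, sq]
  have hnum : ‖log (1 / (1 - a))‖ ^ 2 ≤ Real.log (1 - r) ^ 2 / 4 + π ^ 2 := by
    have hlog := four_mul_log_sq_le (by linarith) (by linarith) hsep (norm_nonneg _)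
      ((norm_sub_le _ _).trans (by rw [norm_one, ha]; nlinarith))
    have := norm_log_sq_le (1 / (1 - a))
    rw [norm_div, norm_one, one_div ‖1 - a‖, Real.log_inv, neg_sq] at this
    linarith
  have hden : (Real.log (1 - r) + Real.log 2) ^ 2 ≤ Real.log (1 - r ^ 2) ^ 2 := by
    have hsplit : Real.log (1 - r ^ 2) = Real.log (1 - r) + Real.log (1 + r) := by
      rw [← Real.log_mul (by linarith) (by linarith)]; ring_nf
    have h2 : Real.log (1 + r) ≤ Real.log 2 := Real.log_le_log (by linarith) (by linarith)
    have h4 : Real.log (1 - r) ≤ Real.log (1 / 4) := Real.log_le_log (by linarith) (by linarith)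
    have hl2 : Real.log (1 / 4) + Real.log 2 ≤ 0 := by
      rw [← Real.log_mul (by norm_num) (by norm_num)]
      exact Real.log_nonpos (by norm_num) (by norm_num)
    rw [hsplit]
    nlinarith [Real.log_pos (by norm_num : (1 : ℝ) < 2), Real.log_pos (by linarith : 1 < 1 + r)]
  have hpos : 0 < Real.log (1 - r ^ 2) ^ 2 :=
    sq_pos_of_neg (Real.log_neg (by nlinarith) (by nlinarith))
  have hβ : 0 ≤ 1 - ε ^ 2 := by
    by_contra! h
    nlinarith [pi_pos, sq_nonneg (Real.log (1 - r)), sq_nonneg (Real.log (1 - r) + Real.log 2)]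
  rw [dirDelta_eq_of_norm_eq (by linarith) hx hy]
  refine Real.le_sqrt_of_sq_le ?_
  rw [le_sub_comm, div_le_iff₀ hpos]
  nlinarith [mul_le_mul_of_nonneg_left hden hβ]

theorem exists_dirDelta_separated_finset {r ε : ℝ} (hr : 3 / 4 ≤ r) (hr1 : r < 1)
    (hε : Real.log (1 - r) ^ 2 / 4 + π ^ 2 ≤ (1 - ε ^ 2) * (Real.log (1 - r) + Real.log 2) ^ 2) :
    ∃ D : Finset ℂ, (∀ z ∈ D, ‖z‖ = r) ∧ 1 / √(1 - r) ≤ D.card ∧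
      ∀ x ∈ D, ∀ y ∈ D, x ≠ y → ε ≤ dirDelta x y := by
  have ht : 0 < 1 - r := by linarith
  set N := ⌈1 / √(1 - r)⌉₊
  have hN : N ≠ 0 := (Nat.ceil_pos.2 (one_div_pos.2 (Real.sqrt_pos.2 ht))).ne'
  obtain ⟨D, hnorm, hcard, hsep⟩ := Complex.exists_finset_norm_eq_card_eq (by linarith : 0 < r) hN
  refine ⟨D, hnorm, hcard ▸ Nat.le_ceil _, fun x hx y hy hxy ↦
    le_dirDelta_of_separated hr hr1 (hnorm x hx) (hnorm y hy) ?_ hε⟩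
  have hNsq := Nat.ceil_one_div_sqrt_sq_le ht (by linarith)
  have hNpos : (0 : ℝ) < N ^ 2 := by positivity
  refine le_trans ?_ (hsep x hx y hy hxy)
  rw [le_div_iff₀ hNpos]
  rw [le_div_iff₀ ht] at hNsq
  nlinarith

/-- For every `0 < ε < √(3/4)` there is `r₀ ∈ (0,1)` such that for all `r₀ < r < 1`,
the circle `C_r = {z : |z| = r}` contains an `ε`-separated set (for the Dirichlet
metric) with at least `1/√(1−r)` points. -/
theorem separated_points_on_circle (ε : ℝ) (hε0 : 0 < ε) (hε1 : ε < Real.sqrt (3 / 4)) :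
    ∃ r₀ ∈ Set.Ioo (0 : ℝ) 1, ∀ r : ℝ, r₀ < r → r < 1 →
      ∃ D : Finset ℂ, (∀ z ∈ D, ‖z‖ = r) ∧
        (1 / Real.sqrt (1 - r) ≤ (D.card : ℝ)) ∧
        (∀ x ∈ D, ∀ y ∈ D, x ≠ y → ε ≤ dirDelta x y) := by
  have hβ : 1 / 4 < 1 - ε ^ 2 := by
    have := (Real.lt_sqrt hε0.le).1 hε1
    linarith
  have hev : ∀ᶠ r in 𝓝[<] 1,
      Real.log (1 - r) ^ 2 / 4 + π ^ 2 ≤ (1 - ε ^ 2) * (Real.log (1 - r) + Real.log 2) ^ 2 :=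
    tendsto_log_one_sub_nhdsLT_one.eventually (eventually_sq_div_four_add_le_mul_sq hβ _ _)
  obtain ⟨l, hl, hsub⟩ := mem_nhdsLT_iff_exists_Ioo_subset.1 hev
  refine ⟨max l (3 / 4), ⟨by positivity, max_lt hl (by norm_num)⟩, fun r hr hr1 ↦ ?_⟩
  exact exists_dirDelta_separated_finset (le_of_max_le_right hr.le) hr1
    (hsub ⟨(le_max_left _ _).trans_lt hr, hr1⟩)
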